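/- arXiv:0710.3177 — 2 statements merged into one kernel-verified Lean document; each statement's English description precedes it below -/
import Mathlib

section
/- For every positive integer m, S^{(m)}((2m)^4) = (2m/3)·(4m² + 6m − 1). -/
def S (m x : ℕ) : ℤ :=
  ∑ n ∈ Finset.range x, if (2 * m + 1) ∣ n then (-1 : ℤ) ^ ((Nat.digits (2 * m) n).sum) else 0

/-!
Write `n < b ^ 4` in base `b = 2m` with digits `d₀, d₁, d₂, d₃`. Since `b ≡ -1 [MOD b + 1]`,
`b + 1 ∣ n` iff `(d₀ + d₂) - (d₁ + d₃)` is `0` or `±(b + 1)`, and as `b + 1` is odd the sign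
`(-1) ^ (d₀ + d₁ + d₂ + d₃)` is `+1` in the first case and `-1` in the other two. Counting the
solutions of these three linear equations for fixed `d₂, d₃` gives `b + 1 - 2 |d₂ - d₃|`
(or `b` when `d₂ = d₃`), and summing over `d₂, d₃` with `3 ∑ |d₂ - d₃| = b³ - b` leaves
`3 S = b³ + 3b² - b`.
-/

open Finset

theorem Finset.sum_range_mul_eq_sum_sum {M : Type*} [AddCommMonoid M] (f : ℕ → M) (b k : ℕ) :
    ∑ n ∈ range (b * k), f n = ∑ i ∈ range k, ∑ j ∈ range b, f (b * i + j) := by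
  induction k with
  | zero => simp
  | succ k ih => rw [Nat.mul_succ, sum_range_add, ih, sum_range_succ]

theorem Nat.digits_sum_mul_add {b d : ℕ} (hb : 1 < b) (hd : d < b) (n : ℕ) :
    (Nat.digits b (b * n + d)).sum = (Nat.digits b n).sum + d := by
  by_cases h : d = 0 ∧ n = 0
  · simp [h.1, h.2]
  · rw [add_comm, Nat.digits_add b hb d n hd (by tauto), List.sum_cons, add_comm]

theorem Nat.digits_sum_four {b d₀ d₁ d₂ d₃ : ℕ} (hb : 1 < b)
    (h₀ : d₀ < b) (h₁ : d₁ < b) (h₂ : d₂ < b) (h₃ : d₃ < b) :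
    (Nat.digits b (b * (b * (b * d₃ + d₂) + d₁) + d₀)).sum = d₃ + d₂ + d₁ + d₀ := by
  have hd₃ : (Nat.digits b d₃).sum = d₃ := by simpa using Nat.digits_sum_mul_add hb h₃ 0
  rw [Nat.digits_sum_mul_add hb h₀, Nat.digits_sum_mul_add hb h₁, Nat.digits_sum_mul_add hb h₂, hd₃]

theorem Int.dvd_iff_eq_zero_or_eq_or_eq_neg {k x : ℤ} (hx : |x| < 2 * k) :
    k ∣ x ↔ x = 0 ∨ x = k ∨ x = -k := by
  constructor
  · rintro ⟨q, rfl⟩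
    have hk : 0 < k := by linarith [abs_nonneg (k * q)]
    have hq : |q| < 2 := by
      rw [abs_mul, abs_of_pos hk] at hx
      exact lt_of_mul_lt_mul_left (by linarith) hk.le
    obtain ⟨hq₁, hq₂⟩ := abs_lt.mp hq
    interval_cases q <;> simp
  · rintro (rfl | rfl | rfl) <;> simp

theorem dvd_digits_four_iff {b d₀ d₁ d₂ d₃ : ℕ}
    (h₀ : d₀ < b) (h₁ : d₁ < b) (h₂ : d₂ < b) (h₃ : d₃ < b) :
    b + 1 ∣ b * (b * (b * d₃ + d₂) + d₁) + d₀ ↔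
      d₁ + d₃ = d₀ + d₂ ∨ d₁ + (d₃ + (b + 1)) = d₀ + d₂ ∨ d₁ + d₃ = d₀ + (d₂ + (b + 1)) := by
  have alternating : ((b * (b * (b * d₃ + d₂) + d₁) + d₀ : ℕ) : ℤ) =
      ((d₀ + d₂ : ℤ) - (d₁ + d₃)) + (b + 1) * (d₁ + d₂ * (b - 1) + d₃ * (b ^ 2 - b + 1)) := by
    push_cast; ring
  rw [← Int.natCast_dvd_natCast, alternating, Nat.cast_add, Nat.cast_one,
    dvd_add_left (dvd_mul_right _ _), Int.dvd_iff_eq_zero_or_eq_or_eq_neg (by rw [abs_lt]; omega)]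
  omega

theorem ite_dvd_neg_one_pow_digits_sum_four {b d₀ d₁ d₂ d₃ : ℕ} (hb : 1 < b) (hbe : Even b)
    (h₀ : d₀ < b) (h₁ : d₁ < b) (h₂ : d₂ < b) (h₃ : d₃ < b) :
    (if b + 1 ∣ b * (b * (b * d₃ + d₂) + d₁) + d₀ then
        (-1 : ℤ) ^ (Nat.digits b (b * (b * (b * d₃ + d₂) + d₁) + d₀)).sum else 0) =
      (if d₁ + d₃ = d₀ + d₂ then 1 else 0) - (if d₁ + (d₃ + (b + 1)) = d₀ + d₂ then 1 else 0) -
        (if d₁ + d₃ = d₀ + (d₂ + (b + 1)) then 1 else 0) := by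
  rw [Nat.digits_sum_four hb h₀ h₁ h₂ h₃, if_congr (dvd_digits_four_iff h₀ h₁ h₂ h₃) rfl rfl]
  obtain ⟨c, rfl⟩ := hbe
  split_ifs <;> first
    | omega
    | rw [show d₃ + d₂ + d₁ + d₀ = 2 * (d₁ + d₃) by omega, pow_mul]; simp
    | rw [show d₃ + d₂ + d₁ + d₀ = 2 * (d₁ + d₃ + c) + 1 by omega, pow_succ, pow_mul]; simp
    | rw [show d₃ + d₂ + d₁ + d₀ = 2 * (d₀ + d₂ + c) + 1 by omega, pow_succ, pow_mul]; simp

theorem sum_range_ite_add_eq_add (N x a c : ℕ) :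
    ∑ y ∈ range N, (if x + a = y + c then 1 else 0 : ℤ) =
      if c ≤ x + a ∧ x + a < N + c then 1 else 0 := by
  induction N with
  | zero => simp
  | succ N ih => rw [sum_range_succ, ih]; split_ifs <;> omega

theorem sum_range_sum_range_ite_add_eq_add (b a c : ℕ) :
    ∑ x ∈ range b, ∑ y ∈ range b, (if x + a = y + c then 1 else 0 : ℤ) = (b - a.dist c : ℕ) := by
  have solutions : (range b).filter (fun x => c ≤ x + a ∧ x + a < b + c) =
      Ico (c - a) (b - (a - c)) := by
    ext x; simp only [mem_filter, mem_range, mem_Ico]; omega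
  simp_rw [sum_range_ite_add_eq_add, sum_boole, solutions, Nat.card_Ico, Nat.dist]
  congr 1
  omega

theorem sum_range_dist_left (b : ℕ) : 2 * ∑ x ∈ range b, x.dist b = b * (b + 1) := by
  induction b with
  | zero => simp
  | succ b ih =>
    have shift : ∀ x ∈ range (b + 1), x.dist (b + 1) = x.dist b + 1 := fun x hx => by
      simp only [mem_range, Nat.dist] at hx ⊢; omega
    rw [sum_congr rfl shift, sum_add_distrib, sum_range_succ, Nat.dist_self, sum_const,
      card_range, smul_eq_mul]
    linarith

theorem sum_range_sum_range_dist (b : ℕ) :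
    3 * ∑ x ∈ range b, ∑ y ∈ range b, x.dist y + b = b ^ 3 := by
  induction b with
  | zero => simp
  | succ b ih =>
    have row := sum_range_dist_left b
    simp only [sum_range_succ, sum_add_distrib, Nat.dist_self, Nat.dist_comm b]
    nlinarith

theorem sum_range_sum_range_signed_solutions {b d₂ d₃ : ℕ} (h₂ : d₂ < b) (h₃ : d₃ < b) :
    ∑ d₁ ∈ range b, ∑ d₀ ∈ range b,
      ((if d₁ + d₃ = d₀ + d₂ then 1 else 0) - (if d₁ + (d₃ + (b + 1)) = d₀ + d₂ then 1 else 0) -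
        (if d₁ + d₃ = d₀ + (d₂ + (b + 1)) then 1 else 0) : ℤ) =
      b + 1 - 2 * d₃.dist d₂ - if d₃ = d₂ then 1 else 0 := by
  simp only [sum_sub_distrib, sum_range_sum_range_ite_add_eq_add, Nat.dist]
  split_ifs <;> omega

theorem three_mul_sum_range_pow_four {b : ℕ} (hb : Even b) :
    3 * ∑ n ∈ range (b ^ 4), (if b + 1 ∣ n then (-1 : ℤ) ^ (Nat.digits b n).sum else 0) =
      b ^ 3 + 3 * b ^ 2 - b := by
  obtain rfl | hb₀ := eq_or_ne b 0
  · simp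
  have hb₁ : 1 < b := by obtain ⟨c, rfl⟩ := hb; omega
  have digits : ∑ n ∈ range (b ^ 4), (if b + 1 ∣ n then (-1 : ℤ) ^ (Nat.digits b n).sum else 0) =
      ∑ d₃ ∈ range b, ∑ d₂ ∈ range b, ((b : ℤ) + 1 - 2 * d₃.dist d₂ - if d₃ = d₂ then 1 else 0) := by
    rw [show b ^ 4 = b * (b * (b * b)) by ring, sum_range_mul_eq_sum_sum,
      sum_range_mul_eq_sum_sum, sum_range_mul_eq_sum_sum]
    refine sum_congr rfl fun d₃ hd₃ => sum_congr rfl fun d₂ hd₂ => ?_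
    rw [← sum_range_sum_range_signed_solutions (mem_range.mp hd₂) (mem_range.mp hd₃)]
    refine sum_congr rfl fun d₁ hd₁ => sum_congr rfl fun d₀ hd₀ => ?_
    exact ite_dvd_neg_one_pow_digits_sum_four hb₁ hb (mem_range.mp hd₀) (mem_range.mp hd₁)
      (mem_range.mp hd₂) (mem_range.mp hd₃)
  have grid := sum_range_sum_range_dist b
  simp only [digits, sum_sub_distrib, ← mul_sum, sum_ite_eq, sum_ite_mem, inter_self, sum_const,
    card_range, nsmul_eq_mul]
  zify at grid
  linarith

theorem S_fourth_power_general (m : ℕ) :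
    (S m ((2 * m) ^ 4) : ℚ) = (2 * m / 3) * (4 * m ^ 2 + 6 * m - 1) := by
  have h : ((3 * S m ((2 * m) ^ 4) : ℤ) : ℚ) = (((2 * m) ^ 3 + 3 * (2 * m) ^ 2 - 2 * m : ℤ) : ℚ) := by
    rw [S]
    exact_mod_cast three_mul_sum_range_pow_four (even_two_mul m)
  push_cast at h
  linarith

theorem S_fourth_power (m : ℕ) (hm : 0 < m) :
    (S m ((2 * m) ^ 4) : ℚ) = (2 * m / 3) * (4 * m ^ 2 + 6 * m - 1) :=
  S_fourth_power_general m
end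

section
/- For every positive integer m, the m real numbers tan(πl/(2m+1)), l = 1, …, m, are exactly the positive roots of the polynomial Σ_{r=0}^{m} (−1)^r · C(2m+1, 2r) · x^{2m−2r}, and all 2m roots of this polynomial are ±tan(πl/(2m+1)), l = 1, …, m. -/
open Real Finset

lemma sum_range_two_mul' (n : ℕ) (g : ℕ → ℝ) :
    ∑ k ∈ range (2 * n), g k = ∑ j ∈ range n, (g (2 * j) + g (2 * j + 1)) := by
  induction n with
  | zero => simp
  | succ n ih =>
    have h : 2 * (n + 1) = 2 * n + 1 + 1 := by ring
    rw [h, sum_range_succ, sum_range_succ, sum_range_succ, ih]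
    abel

lemma keyA (m : ℕ) (x : ℝ) :
    x * (∑ r ∈ Finset.range (m + 1), (-1 : ℝ) ^ r * (Nat.choose (2 * m + 1) (2 * r)) *
          x ^ (2 * m - 2 * r)) = (((x : ℂ) + Complex.I) ^ (2 * m + 1)).re := by
  rw [add_pow, Complex.re_sum]
  have h2 : 2 * m + 1 + 1 = 2 * (m + 1) := by ring
  rw [h2, sum_range_two_mul']
  have heven : ∀ j ∈ range (m+1),
      (((x:ℂ) ^ (2*j) * Complex.I ^ (2*m+1-(2*j)) * ((2*m+1).choose (2*j) : ℂ)).re +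
       ((x:ℂ) ^ (2*j+1) * Complex.I ^ (2*m+1-(2*j+1)) * ((2*m+1).choose (2*j+1) : ℂ)).re)
      = x ^ (2*j+1) * (-1:ℝ)^(m-j) * ((2*m+1).choose (2*j+1)) := by
    intro j hj
    rw [Finset.mem_range] at hj
    have hj' : j ≤ m := by omega
    have e1 : 2*m+1-(2*j) = 2*(m-j)+1 := by omega
    have e2 : 2*m+1-(2*j+1) = 2*(m-j) := by omega
    rw [e1, e2]
    have i1 : ((x:ℂ) ^ (2*j) * Complex.I ^ (2*(m-j)+1) * ((2*m+1).choose (2*j) : ℂ))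
        = ((x ^ (2*j) * (-1:ℝ)^(m-j) * ((2*m+1).choose (2*j)) : ℝ) : ℂ) * Complex.I := by
      rw [pow_succ, pow_mul Complex.I, Complex.I_sq]
      push_cast
      ring
    have i2 : ((x:ℂ) ^ (2*j+1) * Complex.I ^ (2*(m-j)) * ((2*m+1).choose (2*j+1) : ℂ))
        = ((x ^ (2*j+1) * (-1:ℝ)^(m-j) * ((2*m+1).choose (2*j+1)) : ℝ) : ℂ) := by
      rw [pow_mul Complex.I, Complex.I_sq]
      push_cast
      ring
    rw [i1, i2, Complex.mul_I_re, Complex.ofReal_im, Complex.ofReal_re, neg_zero, zero_add]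
  rw [Finset.sum_congr rfl heven, Finset.mul_sum, ← Finset.sum_range_reflect]
  refine Finset.sum_congr rfl ?_
  intro j hj
  rw [Finset.mem_range] at hj
  have hj' : j ≤ m := by omega
  have e3 : m + 1 - 1 - j = m - j := by omega
  have e4 : 2*m - 2*(m-j) = 2*j := by omega
  have e5 : (2*m+1).choose (2*(m-j)) = (2*m+1).choose (2*j+1) := by
    have := Nat.choose_symm (n := 2*m+1) (k := 2*j+1) (by omega)
    rw [show 2*m+1-(2*j+1) = 2*(m-j) by omega] at this
    exact this
  rw [e3, e4, e5]
  ring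



lemma keyB (x : ℝ) :
    (x : ℂ) + Complex.I =
      ((Real.cos (Real.arctan x))⁻¹ : ℝ) *
        Complex.exp ((Real.pi / 2 - Real.arctan x : ℝ) * Complex.I) := by
  have hc := Real.cos_arctan_pos x
  rw [Complex.exp_mul_I, ← Complex.ofReal_cos, ← Complex.ofReal_sin,
    Real.cos_pi_div_two_sub, Real.sin_pi_div_two_sub]
  have h1 : (Real.cos (Real.arctan x))⁻¹ * Real.sin (Real.arctan x) = x := by
    have := Real.tan_arctan x
    rw [Real.tan_eq_sin_div_cos] at this
    rw [inv_mul_eq_div]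
    exact this
  have h2 : (Real.cos (Real.arctan x))⁻¹ * Real.cos (Real.arctan x) = 1 :=
    inv_mul_cancel₀ hc.ne'
  have key : (((Real.cos (Real.arctan x))⁻¹ : ℝ) : ℂ) *
      ((Real.sin (Real.arctan x) : ℂ) + (Real.cos (Real.arctan x) : ℂ) * Complex.I)
      = ((((Real.cos (Real.arctan x))⁻¹ * Real.sin (Real.arctan x) : ℝ)) : ℂ) +
        ((((Real.cos (Real.arctan x))⁻¹ * Real.cos (Real.arctan x) : ℝ)) : ℂ) * Complex.I := by
    push_cast
    ring
  rw [key, h1, h2]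
  simp

lemma keyC (m : ℕ) (x : ℝ) :
    x * (∑ r ∈ Finset.range (m + 1), (-1 : ℝ) ^ r * (Nat.choose (2 * m + 1) (2 * r)) *
          x ^ (2 * m - 2 * r)) =
      ((Real.cos (Real.arctan x))⁻¹) ^ (2 * m + 1) *
        Real.cos ((2 * m + 1 : ℕ) * (Real.pi / 2 - Real.arctan x)) := by
  rw [keyA, keyB x, mul_pow, ← Complex.exp_nat_mul]
  have h1 : ((2 * m + 1 : ℕ) : ℂ) * ((Real.pi / 2 - Real.arctan x : ℝ) * Complex.I)
      = ((((2 * m + 1 : ℕ) : ℝ) * (Real.pi / 2 - Real.arctan x) : ℝ) : ℂ) * Complex.I := by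
    push_cast
    ring
  rw [h1, ← Complex.ofReal_pow, Complex.re_ofReal_mul, Complex.exp_ofReal_mul_I_re]

lemma master (m : ℕ) (x : ℝ) (hx : x ≠ 0) :
    (∑ r ∈ Finset.range (m + 1), (-1 : ℝ) ^ r * (Nat.choose (2 * m + 1) (2 * r)) *
          x ^ (2 * m - 2 * r)) = 0 ↔
      ∃ l : ℤ, l ≠ 0 ∧ |l| ≤ (m : ℤ) ∧ x = Real.tan (Real.pi * l / (2 * m + 1)) := by
  have hc : (0:ℝ) < ((Real.cos (Real.arctan x))⁻¹) ^ (2 * m + 1) := by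
    have := Real.cos_arctan_pos x
    positivity
  have hN : (0:ℝ) < 2 * (m:ℝ) + 1 := by positivity
  have hpi := Real.pi_pos
  constructor
  · intro hS
    have h0 : Real.cos ((2 * m + 1 : ℕ) * (Real.pi / 2 - Real.arctan x)) = 0 := by
      have := keyC m x
      rw [hS, mul_zero] at this
      have := this.symm
      rcases mul_eq_zero.mp this with h | h
      · exact absurd h hc.ne'
      · exact h
    rw [Real.cos_eq_zero_iff] at h0
    obtain ⟨k, hk⟩ := h0
    push_cast at hk
    set θ := Real.arctan x with hθdef
    have hθ : θ = Real.pi * ((m:ℝ) - (k:ℝ)) / (2 * (m:ℝ) + 1) := by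
      rw [eq_div_iff hN.ne']
      linear_combination -hk
    refine ⟨(m:ℤ) - k, ?_, ?_, ?_⟩
    · intro h
      have : (m:ℝ) - (k:ℝ) = 0 := by exact_mod_cast congrArg (Int.cast : ℤ → ℝ) h
      rw [this] at hθ
      simp at hθ
      have : x = 0 := by
        rw [← Real.tan_arctan x, ← hθdef, hθ, Real.tan_zero]
      exact hx this
    · rw [abs_le]
      have hlt := Real.arctan_lt_pi_div_two x
      have hgt := Real.neg_pi_div_two_lt_arctan x
      rw [← hθdef, hθ] at hlt hgt
      constructor
      · -- -(m:ℤ) ≤ m - k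
        have : -(2 * (m:ℝ) + 1) < 2 * ((m:ℝ) - k) := by
          rw [lt_div_iff₀ hN] at hgt
          nlinarith [hgt, hpi]
        have h2 : -(2 * (m:ℤ) + 1) < 2 * ((m:ℤ) - k) := by exact_mod_cast this
        omega
      · have : 2 * ((m:ℝ) - k) < 2 * (m:ℝ) + 1 := by
          rw [div_lt_iff₀ hN] at hlt
          nlinarith [hlt]
        have h2 : 2 * ((m:ℤ) - k) < 2 * (m:ℤ) + 1 := by exact_mod_cast this
        omega
    · rw [← Real.tan_arctan x, ← hθdef, hθ]
      norm_num
  · rintro ⟨l, hl0, hlm, hxl⟩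
    have habs : |(l:ℝ)| ≤ (m:ℝ) := by exact_mod_cast hlm
    have hang1 : Real.pi * l / (2 * (m:ℝ) + 1) < Real.pi / 2 := by
      rw [div_lt_iff₀ hN]
      have : (l:ℝ) ≤ m := (abs_le.mp habs).2
      nlinarith
    have hang2 : -(Real.pi / 2) < Real.pi * l / (2 * (m:ℝ) + 1) := by
      rw [lt_div_iff₀ hN]
      have : -(m:ℝ) ≤ l := (abs_le.mp habs).1
      nlinarith
    have harc : Real.arctan x = Real.pi * l / (2 * (m:ℝ) + 1) := by
      rw [hxl]
      exact Real.arctan_tan hang2 hang1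
    have hcos : Real.cos ((2 * m + 1 : ℕ) * (Real.pi / 2 - Real.arctan x)) = 0 := by
      rw [Real.cos_eq_zero_iff]
      refine ⟨(m:ℤ) - l, ?_⟩
      rw [harc]
      push_cast
      field_simp
      ring
    have := keyC m x
    rw [hcos, mul_zero] at this
    rcases mul_eq_zero.mp this with h | h
    · exact absurd h hx
    · exact h

lemma S_even (m : ℕ) (x : ℝ) :
    (∑ r ∈ Finset.range (m + 1), (-1 : ℝ) ^ r * (Nat.choose (2 * m + 1) (2 * r)) *
          (-x) ^ (2 * m - 2 * r)) =
    (∑ r ∈ Finset.range (m + 1), (-1 : ℝ) ^ r * (Nat.choose (2 * m + 1) (2 * r)) *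
          x ^ (2 * m - 2 * r)) := by
  refine Finset.sum_congr rfl ?_
  intro r hr
  rw [Finset.mem_range] at hr
  have : Even (2 * m - 2 * r) := ⟨m - r, by omega⟩
  rw [this.neg_pow]

lemma S_zero_ne (m : ℕ) (hm : 0 < m) :
    (∑ r ∈ Finset.range (m + 1), (-1 : ℝ) ^ r * (Nat.choose (2 * m + 1) (2 * r)) *
          (0:ℝ) ^ (2 * m - 2 * r)) ≠ 0 := by
  rw [Finset.sum_eq_single m]
  · have : 2 * m - 2 * m = 0 := by omega
    rw [this, pow_zero, mul_one]
    have h1 : ((2*m+1).choose (2*m) : ℝ) = (2*m+1 : ℕ) := by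
      norm_cast
      rw [← Nat.choose_symm (by omega)]
      simp
    rw [h1]
    intro h
    rcases mul_eq_zero.mp h with h | h
    · exact absurd h (by positivity)
    · have : (0:ℝ) < (2*m+1:ℕ) := by positivity
      rw [h] at this
      exact lt_irrefl 0 this
  · intro r hr hrm
    rw [Finset.mem_range] at hr
    have : 2 * m - 2 * r ≠ 0 := by omega
    rw [zero_pow this, mul_zero]
  · intro h
    exact absurd (Finset.self_mem_range_succ m) h

lemma tan_pos_of_mem (m l : ℕ) (h1 : 1 ≤ l) (h2 : l ≤ m) :
    0 < Real.tan (Real.pi * l / (2 * m + 1)) := by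
  have hpi := Real.pi_pos
  have hN : (0:ℝ) < 2 * (m:ℝ) + 1 := by positivity
  apply Real.tan_pos_of_pos_of_lt_pi_div_two
  · have : (1:ℝ) ≤ l := by exact_mod_cast h1
    positivity
  · rw [div_lt_iff₀ hN]
    have : (l:ℝ) ≤ m := by exact_mod_cast h2
    nlinarith


theorem tan_roots (m : ℕ) (hm : 0 < m) :
    (∀ x : ℝ, 0 < x →
      ((∑ r ∈ Finset.range (m + 1), (-1 : ℝ) ^ r * (Nat.choose (2 * m + 1) (2 * r)) *
          x ^ (2 * m - 2 * r)) = 0 ↔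
        ∃ l ∈ Finset.Icc 1 m, x = Real.tan (Real.pi * l / (2 * m + 1)))) ∧
    (∀ x : ℝ,
      ((∑ r ∈ Finset.range (m + 1), (-1 : ℝ) ^ r * (Nat.choose (2 * m + 1) (2 * r)) *
          x ^ (2 * m - 2 * r)) = 0 ↔
        ∃ l ∈ Finset.Icc 1 m, x = Real.tan (Real.pi * l / (2 * m + 1)) ∨
          x = -Real.tan (Real.pi * l / (2 * m + 1)))) := by

  constructor
  · intro x hx
    rw [master m x hx.ne']
    constructor
    · rintro ⟨l, hl0, hlm, hxl⟩
      rw [abs_le] at hlm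
      have hlpos : 0 < l := by
        by_contra h
        push_neg at h
        have hneg : l < 0 := lt_of_le_of_ne h hl0
        set n : ℕ := (-l).toNat with hn
        have hn1 : 1 ≤ n := by omega
        have hn2 : n ≤ m := by omega
        have hcast : Real.pi * (l:ℝ) / (2 * (m:ℝ) + 1)
            = -(Real.pi * (n:ℝ) / (2 * (m:ℝ) + 1)) := by
          have : ((n:ℤ):ℝ) = -(l:ℝ) := by
            rw [hn]
            push_cast [Int.toNat_of_nonneg (by omega : (0:ℤ) ≤ -l)]
            ring
          push_cast at this ⊢
          rw [this]
          ring
        rw [hcast, Real.tan_neg] at hxl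
        have := tan_pos_of_mem m n hn1 hn2
        linarith [hxl ▸ hx]
      refine ⟨l.toNat, Finset.mem_Icc.mpr ⟨by omega, by omega⟩, ?_⟩
      rw [hxl]
      have hcst : ((l.toNat : ℕ) : ℝ) = (l : ℝ) := by
        exact_mod_cast Int.toNat_of_nonneg (by omega : (0:ℤ) ≤ l)
      rw [hcst]
    · rintro ⟨l, hl, hxl⟩
      rw [Finset.mem_Icc] at hl
      refine ⟨(l:ℤ), by omega, by rw [abs_le]; constructor <;> omega, ?_⟩
      rw [hxl]
      norm_cast
  · intro x
    by_cases hx0 : x = 0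
    · subst hx0
      constructor
      · intro h
        exact absurd h (S_zero_ne m hm)
      · rintro ⟨l, hl, h | h⟩
        · rw [Finset.mem_Icc] at hl
          have := tan_pos_of_mem m l hl.1 hl.2
          linarith [h ▸ this]
        · rw [Finset.mem_Icc] at hl
          have := tan_pos_of_mem m l hl.1 hl.2
          linarith [h ▸ this]
    · rw [master m x hx0]
      constructor
      · rintro ⟨l, hl0, hlm, hxl⟩
        rw [abs_le] at hlm
        rcases lt_or_gt_of_ne hl0 with h | h
        · set n : ℕ := (-l).toNat with hn
          have hn1 : 1 ≤ n := by omega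
          have hn2 : n ≤ m := by omega
          refine ⟨n, Finset.mem_Icc.mpr ⟨hn1, hn2⟩, Or.inr ?_⟩
          have hcast : Real.pi * (l:ℝ) / (2 * (m:ℝ) + 1)
              = -(Real.pi * (n:ℝ) / (2 * (m:ℝ) + 1)) := by
            have : ((n:ℤ):ℝ) = -(l:ℝ) := by
              rw [hn]
              push_cast [Int.toNat_of_nonneg (by omega : (0:ℤ) ≤ -l)]
              ring
            push_cast at this ⊢
            rw [this]
            ring
          rw [hcast, Real.tan_neg] at hxl
          exact hxl
        · refine ⟨l.toNat, Finset.mem_Icc.mpr ⟨by omega, by omega⟩, Or.inl ?_⟩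
          rw [hxl]
          have hcst : ((l.toNat : ℕ) : ℝ) = (l : ℝ) := by
            exact_mod_cast Int.toNat_of_nonneg (by omega : (0:ℤ) ≤ l)
          rw [hcst]
      · rintro ⟨l, hl, h | h⟩
        · rw [Finset.mem_Icc] at hl
          refine ⟨(l:ℤ), by omega, by rw [abs_le]; constructor <;> omega, ?_⟩
          rw [h]
          norm_cast
        · rw [Finset.mem_Icc] at hl
          refine ⟨-(l:ℤ), by omega, by rw [abs_le]; constructor <;> omega, ?_⟩
          rw [h]
          have hcast : Real.pi * ((-(l:ℤ):ℤ):ℝ) / (2 * (m:ℝ) + 1)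
              = -(Real.pi * (l:ℝ) / (2 * (m:ℝ) + 1)) := by
            push_cast
            ring
          rw [hcast, Real.tan_neg]
end
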